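/- Let X be a measurable space of datasets equipped with an adjacency relation Adj, let Ω and Ω' be measurable spaces, let κ be a Markov kernel from X to Ω satisfying (ε,δ)-differential privacy, and let π be any Markov kernel from Ω to Ω'. Then the composed kernel D ↦ (κ D).bind π (i.e. first run κ on D, then run the randomized post-processing π on the result) also satisfies (ε,δ)-differential privacy: for every measurable T ⊆ Ω' and every pair of adjacent datasets D, D', ((κ D).bind π)(T) ≤ e^ε · ((κ D').bind π)(T) + δ. -/

import Mathlib

open MeasureTheory ProbabilityTheory

/-- Post-processing (randomized): if a Markov kernel `κ` from datasets to outputs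
satisfies `(ε, δ)`-differential privacy with respect to an adjacency relation `Adj`,
then composing it with any Markov kernel `π` (randomized post-processing)
preserves the guarantee. -/
theorem dp_postprocessing_bind
    {X Ω Ω' : Type*} [MeasurableSpace X] [MeasurableSpace Ω] [MeasurableSpace Ω']
    (Adj : X → X → Prop)
    (κ : Kernel X Ω) [IsMarkovKernel κ]
    (ε δ : ℝ) (hε : 0 ≤ ε) (hδ : 0 ≤ δ)
    (hDP : ∀ S : Set Ω, MeasurableSet S → ∀ D D' : X, Adj D D' →
      κ D S ≤ ENNReal.ofReal (Real.exp ε) * κ D' S + ENNReal.ofReal δ)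
    (π : Kernel Ω Ω') [IsMarkovKernel π] :
    ∀ T : Set Ω', MeasurableSet T → ∀ D D' : X, Adj D D' →
      (κ D).bind (fun ω => π ω) T ≤
        ENNReal.ofReal (Real.exp ε) * (κ D').bind (fun ω => π ω) T + ENNReal.ofReal δ := by
  intro T hT D D' hAdj
  rw [Measure.bind_apply hT (Kernel.measurable π).aemeasurable,
      Measure.bind_apply hT (Kernel.measurable π).aemeasurable]
  set f : Ω → ℝ := fun ω => (π ω T).toReal with hf
  have hfm : Measurable f := (Kernel.measurable_coe π hT).ennreal_toReal
  have hf01 : ∀ ω, f ω ≤ 1 := by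
    intro ω
    exact ENNReal.toReal_le_of_le_ofReal zero_le_one (by simpa using prob_le_one)
  have hSm : ∀ t : ℝ, MeasurableSet {ω | t < f ω} := fun t =>
    measurableSet_lt measurable_const hfm
  have hfe : ∀ x : X, ∫⁻ ω, π ω T ∂(κ x) =
      ∫⁻ t in Set.Ioi (0:ℝ), κ x {ω | t < f ω} := by
    intro x
    rw [← lintegral_eq_lintegral_meas_lt (κ x)
      (Filter.Eventually.of_forall fun ω => ENNReal.toReal_nonneg) hfm.aemeasurable]
    refine lintegral_congr fun ω => ?_
    rw [ENNReal.ofReal_toReal (measure_ne_top _ _)]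
  rw [hfe D, hfe D']
  have hempty : ∀ (x : X) (t : ℝ), 1 ≤ t → κ x {ω | t < f ω} = 0 := by
    intro x t ht
    have : {ω | t < f ω} = ∅ := by
      ext ω; simp only [Set.mem_setOf_eq, Set.mem_empty_iff_false, iff_false, not_lt]
      exact (hf01 ω).trans ht
    simp [this]
  have hsplit : ∀ x : X, ∫⁻ t in Set.Ioi (0:ℝ), κ x {ω | t < f ω} =
      ∫⁻ t in Set.Ioc (0:ℝ) 1, κ x {ω | t < f ω} := by
    intro x
    have hu : Set.Ioi (0:ℝ) = Set.Ioc 0 1 ∪ Set.Ioi 1 := by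
      rw [Set.Ioc_union_Ioi_eq_Ioi]; norm_num
    rw [hu, lintegral_union measurableSet_Ioi Set.Ioc_disjoint_Ioi_same]
    have h0 : ∫⁻ t in Set.Ioi (1:ℝ), κ x {ω | t < f ω} = ∫⁻ _ in Set.Ioi (1:ℝ), 0 :=
      setLIntegral_congr_fun measurableSet_Ioi
        (fun t ht => hempty x t (le_of_lt ht))
    rw [h0]; simp
  rw [hsplit D, hsplit D']
  calc ∫⁻ t in Set.Ioc (0:ℝ) 1, κ D {ω | t < f ω}
      ≤ ∫⁻ t in Set.Ioc (0:ℝ) 1,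
          (ENNReal.ofReal (Real.exp ε) * κ D' {ω | t < f ω} + ENNReal.ofReal δ) :=
        lintegral_mono fun t => hDP _ (hSm t) D D' hAdj
    _ = ENNReal.ofReal (Real.exp ε) * (∫⁻ t in Set.Ioc (0:ℝ) 1, κ D' {ω | t < f ω})
          + ENNReal.ofReal δ * (volume (Set.Ioc (0:ℝ) 1)) := by
        rw [lintegral_add_right _ measurable_const, lintegral_const,
          lintegral_const_mul' _ _ ENNReal.ofReal_ne_top]
        simp [Measure.restrict_apply]
    _ ≤ ENNReal.ofReal (Real.exp ε) * (∫⁻ t in Set.Ioc (0:ℝ) 1, κ D' {ω | t < f ω})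
          + ENNReal.ofReal δ := by
        simp [Real.volume_Ioc]
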